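/- arXiv:math-ph/9908027 — 5 statements merged into one kernel-verified Lean document; each statement's English description precedes it below -/
import Mathlib

section
/- Properties of the zero-energy scattering solution: if v ≥ 0 and u solves -u'' + ½vu = 0 with u(0)=0, u normalized so that u'(r) → 1 at infinity, and a is the scattering length, then for all r: u(r) ≤ r, u(r) ≥ r - a for r > a, u(r) ≥ 0, 0 ≤ u'(r) ≤ 1, and u'(r) ≥ 1 - a/r for r > a. -/
/-!
Where `u < 0` the equation makes `u` concave, so a negative value of `u` would lie on a concave
arc with nonnegative endpoints (`u 0 = 0` and `u > 0` far out); hence `u ≥ 0` and `u` is convex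
on `[0, ∞)`. Convexity gives `u' ≤ 1` (from `u' → 1`) and `u ≤ r u'` (slope from the origin).
The Wronskian-type quantity `r u' - u` has derivative `r u'' ≥ 0` and tends to `a`, so it is
at most `a`; this makes `(u + a) / r` antitone with limit `1`, whence `u ≥ r - a`, and then
`r u' ≥ u ≥ r - a`.
-/

open Filter Set Topology

lemma MonotoneOn.le_of_tendsto_atTop {f : ℝ → ℝ} {b L x : ℝ} (hf : MonotoneOn f (Ici b))
    (hL : Tendsto f atTop (𝓝 L)) (hx : b ≤ x) : f x ≤ L :=
  ge_of_tendsto hL <| (eventually_ge_atTop x).mono fun _ hy ↦ hf hx (hx.trans hy) hy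

lemma AntitoneOn.ge_of_tendsto_atTop {f : ℝ → ℝ} {b L x : ℝ} (hf : AntitoneOn f (Ici b))
    (hL : Tendsto f atTop (𝓝 L)) (hx : b ≤ x) : L ≤ f x :=
  le_of_tendsto hL <| (eventually_ge_atTop x).mono fun _ hy ↦ hf hx (hx.trans hy) hy

lemma exists_Ioo_forall_neg_of_neg {f : ℝ → ℝ} {s t x : ℝ} (hf : ContinuousOn f (Icc s t))
    (hs : 0 ≤ f s) (ht : 0 ≤ f t) (hx : x ∈ Icc s t) (hfx : f x < 0) :
    ∃ l r, x ∈ Ioo l r ∧ Icc l r ⊆ Icc s t ∧ 0 ≤ f l ∧ 0 ≤ f r ∧ ∀ y ∈ Ioo l r, f y < 0 := by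
  set L := Icc s x ∩ f ⁻¹' Ici 0
  set R := Icc x t ∩ f ⁻¹' Ici 0
  have hL : sSup L ∈ L := IsClosed.csSup_mem
    ((hf.mono (Icc_subset_Icc_right hx.2)).preimage_isClosed_of_isClosed isClosed_Icc isClosed_Ici)
    ⟨s, ⟨le_rfl, hx.1⟩, hs⟩ ⟨x, fun y hy ↦ hy.1.2⟩
  have hR : sInf R ∈ R := IsClosed.csInf_mem
    ((hf.mono (Icc_subset_Icc_left hx.1)).preimage_isClosed_of_isClosed isClosed_Icc isClosed_Ici)
    ⟨t, ⟨hx.2, le_rfl⟩, ht⟩ ⟨x, fun y hy ↦ hy.1.1⟩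
  have hLx : sSup L < x := hL.1.2.lt_of_ne fun h ↦ (h ▸ hL.2 : 0 ≤ f x).not_gt hfx
  have hxR : x < sInf R := hR.1.1.lt_of_ne' fun h ↦ (h ▸ hR.2 : 0 ≤ f x).not_gt hfx
  refine ⟨sSup L, sInf R, ⟨hLx, hxR⟩, Icc_subset_Icc hL.1.1 hR.1.2, hL.2, hR.2, fun y hy ↦ ?_⟩
  by_contra! hfy
  rcases le_total y x with hyx | hxy
  · exact hy.1.not_ge (le_csSup ⟨x, fun z hz ↦ hz.1.2⟩ ⟨⟨hL.1.1.trans hy.1.le, hyx⟩, hfy⟩)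
  · exact hy.2.not_ge (csInf_le ⟨x, fun z hz ↦ hz.1.1⟩ ⟨⟨hxy, hy.2.le.trans hR.1.2⟩, hfy⟩)

lemma nonneg_of_deriv2_nonpos_of_neg {f : ℝ → ℝ} {s t : ℝ} (hf : Differentiable ℝ f)
    (hf' : Differentiable ℝ (deriv f)) (hs : 0 ≤ f s) (ht : 0 ≤ f t)
    (hconc : ∀ x ∈ Ioo s t, f x < 0 → deriv (deriv f) x ≤ 0) : ∀ x ∈ Icc s t, 0 ≤ f x := by
  intro x hx
  by_contra! hfx
  obtain ⟨l, r, hxlr, hlr, hl, hr, hneg⟩ :=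
    exists_Ioo_forall_neg_of_neg hf.continuous.continuousOn hs ht hx hfx
  have hlr' : l ≤ r := (hxlr.1.trans hxlr.2).le
  have hconcave : ConcaveOn ℝ (Icc l r) f := by
    refine concaveOn_of_deriv2_nonpos (convex_Icc l r) hf.continuous.continuousOn
      hf.differentiableOn hf'.differentiableOn fun y hy ↦ ?_
    rw [interior_Icc] at hy
    exact hconc y ⟨(hlr (left_mem_Icc.2 hlr')).1.trans_lt hy.1,
      hy.2.trans_le (hlr (right_mem_Icc.2 hlr')).2⟩ (hneg y hy)
  have := hconcave.ge_on_segment (left_mem_Icc.2 hlr') (right_mem_Icc.2 hlr')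
    (segment_eq_Icc hlr' ▸ Ioo_subset_Icc_self hxlr)
  exact ((le_min hl hr).trans this).not_gt hfx

lemma eventually_pos_of_tendsto_sub_div {u f : ℝ → ℝ} {a c : ℝ} (hc : 0 < c)
    (hf : Tendsto f atTop (𝓝 c)) (hscat : Tendsto (fun r ↦ r - u r / f r) atTop (𝓝 a)) :
    ∀ᶠ r in atTop, 0 < u r := by
  filter_upwards [hf.eventually (eventually_gt_nhds hc),
    hscat.eventually (eventually_lt_nhds (lt_add_one a)), eventually_gt_atTop (a + 1)]
    with r hfr hr hra
  exact (div_pos_iff_of_pos_right hfr).1 (by linarith)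

lemma tendsto_mul_sub_of_tendsto_sub_div {u f : ℝ → ℝ} {a c : ℝ} (hc : c ≠ 0)
    (hf : Tendsto f atTop (𝓝 c)) (hscat : Tendsto (fun r ↦ r - u r / f r) atTop (𝓝 a)) :
    Tendsto (fun r ↦ r * f r - u r) atTop (𝓝 (c * a)) := by
  refine (hf.mul hscat).congr' ?_
  filter_upwards [hf.eventually_ne hc] with r hfr
  field_simp

lemma tendsto_add_div_of_tendsto_mul_sub {u f : ℝ → ℝ} {a c : ℝ} (hf : Tendsto f atTop (𝓝 c))
    (hw : Tendsto (fun r ↦ r * f r - u r) atTop (𝓝 a)) :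
    Tendsto (fun r ↦ (u r + a) / r) atTop (𝓝 c) := by
  have hdecay : Tendsto (fun r ↦ (r * f r - u r - a) / r) atTop (𝓝 0) :=
    (hw.sub_const a).div_atTop tendsto_id
  have := hf.sub hdecay
  rw [sub_zero] at this
  refine this.congr' ?_
  filter_upwards [eventually_ne_atTop 0] with r hr
  field_simp
  ring

lemma monotoneOn_mul_deriv_sub {f : ℝ → ℝ} (hf : Differentiable ℝ f)
    (hf' : Differentiable ℝ (deriv f)) (hf'' : ∀ x, 0 < x → 0 ≤ deriv (deriv f) x) :
    MonotoneOn (fun x ↦ x * deriv f x - f x) (Ici 0) := by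
  have hderiv (x : ℝ) : HasDerivAt (fun x ↦ x * deriv f x - f x) (x * deriv (deriv f) x) x := by
    refine (((hasDerivAt_id' x).mul (hf' x).hasDerivAt).sub (hf x).hasDerivAt).congr_deriv ?_
    ring
  refine monotoneOn_of_deriv_nonneg (convex_Ici 0)
    (fun x _ ↦ (hderiv x).continuousAt.continuousWithinAt)
    (fun x _ ↦ (hderiv x).differentiableAt.differentiableWithinAt) fun x hx ↦ ?_
  rw [interior_Ici] at hx
  rw [(hderiv x).deriv]
  exact mul_nonneg hx.le (hf'' x hx)

lemma antitoneOn_add_div_of_mul_deriv_sub_le {f : ℝ → ℝ} {c : ℝ} (hf : Differentiable ℝ f)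
    (hc : ∀ x, 0 < x → x * deriv f x - f x ≤ c) :
    AntitoneOn (fun x ↦ (f x + c) / x) (Ioi 0) := by
  have hderiv (x : ℝ) (hx : 0 < x) :
      HasDerivAt (fun x ↦ (f x + c) / x) ((deriv f x * x - (f x + c) * 1) / x ^ 2) x :=
    ((hf x).hasDerivAt.add_const c).div (hasDerivAt_id x) hx.ne'
  refine antitoneOn_of_deriv_nonpos (convex_Ioi 0)
    (fun x hx ↦ (hderiv x hx).continuousAt.continuousWithinAt)
    (fun x hx ↦ (hderiv x (interior_subset hx)).differentiableAt.differentiableWithinAt)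
    fun x hx ↦ ?_
  rw [interior_Ioi] at hx
  rw [(hderiv x hx).deriv]
  exact div_nonpos_of_nonpos_of_nonneg (by linarith [hc x hx]) (sq_nonneg x)

theorem stmt_4_general (v u : ℝ → ℝ) (a : ℝ)
    (hv : ∀ r, 0 < r → 0 ≤ v r)
    (hu : ContDiff ℝ 2 u) (h0 : u 0 = 0)
    (hODE : ∀ r, 0 < r → deriv (deriv u) r = (1 / 2) * v r * u r)
    (hnorm : Tendsto (deriv u) atTop (nhds 1))
    (hscat : Tendsto (fun r => r - u r / deriv u r) atTop (nhds a)) :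
    ∀ r, 0 < r →
      u r ≤ r ∧ 0 ≤ u r ∧ 0 ≤ deriv u r ∧ deriv u r ≤ 1 ∧
      (a < r → r - a ≤ u r ∧ 1 - a / r ≤ deriv u r) := by
  have hud : Differentiable ℝ u := hu.differentiable (by norm_num)
  have hu'd : Differentiable ℝ (deriv u) := hu.differentiable_deriv_two
  have hu_nonneg (r : ℝ) (hr : 0 ≤ r) : 0 ≤ u r := by
    obtain ⟨R, hR, hrR⟩ :=
      ((eventually_pos_of_tendsto_sub_div one_pos hnorm hscat).and (eventually_ge_atTop r)).exists
    refine nonneg_of_deriv2_nonpos_of_neg hud hu'd h0.ge hR.le (fun x hx hux ↦ ?_) r ⟨hr, hrR⟩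
    rw [hODE x hx.1]
    nlinarith [hv x hx.1]
  have hu'' (r : ℝ) (hr : 0 < r) : 0 ≤ deriv (deriv u) r := by
    rw [hODE r hr]
    exact mul_nonneg (mul_nonneg (by norm_num) (hv r hr)) (hu_nonneg r hr.le)
  have hmono : MonotoneOn (deriv u) (Ici 0) :=
    monotoneOn_of_deriv_nonneg (convex_Ici 0) hu'd.continuous.continuousOn hu'd.differentiableOn
      fun x hx ↦ hu'' x (by simpa using hx)
  have hconv : ConvexOn ℝ (Ici 0) u := (hmono.mono interior_subset).convexOn_of_deriv
    (convex_Ici 0) hud.continuous.continuousOn hud.differentiableOn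
  have hu_le (r : ℝ) (hr : 0 < r) : u r ≤ r * deriv u r := by
    have := hconv.slope_le_deriv self_mem_Ici hr.le hr (hud r)
    rwa [slope_def_field, h0, sub_zero, sub_zero, div_le_iff₀' hr] at this
  have hwlim : Tendsto (fun r ↦ r * deriv u r - u r) atTop (𝓝 a) := by
    simpa using tendsto_mul_sub_of_tendsto_sub_div one_ne_zero hnorm hscat
  have hw (r : ℝ) (hr : 0 < r) : r * deriv u r - u r ≤ a :=
    (monotoneOn_mul_deriv_sub hud hu'd hu'').le_of_tendsto_atTop hwlim hr.le
  intro r hr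
  have hu'1 : deriv u r ≤ 1 := hmono.le_of_tendsto_atTop hnorm hr.le
  have hra : 1 ≤ (u r + a) / r :=
    ((antitoneOn_add_div_of_mul_deriv_sub_le hud hw).mono (Ici_subset_Ioi.2 hr)).ge_of_tendsto_atTop
      (tendsto_add_div_of_tendsto_mul_sub hnorm hwlim) le_rfl
  rw [le_div_iff₀ hr] at hra
  refine ⟨by nlinarith [hu_le r hr], hu_nonneg r hr.le, ?_, hu'1, fun _ ↦ ⟨by linarith, ?_⟩⟩
  · nlinarith [hu_le r hr, hu_nonneg r hr.le]
  · rw [sub_le_comm, le_div_iff₀ hr]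
    nlinarith [hu_le r hr]

/-- Properties of the zero-energy scattering solution: `u(r) ≤ r`, `u ≥ 0`,
`0 ≤ u' ≤ 1`, and for `r > a`, `u(r) ≥ r - a` and `u'(r) ≥ 1 - a/r`. -/
theorem stmt_4 (v u : ℝ → ℝ) (a : ℝ) (ha : 0 ≤ a)
    (hv : ∀ r, 0 < r → 0 ≤ v r)
    (hu : ContDiff ℝ 2 u) (h0 : u 0 = 0)
    (hODE : ∀ r, 0 < r → deriv (deriv u) r = (1 / 2) * v r * u r)
    (hnorm : Tendsto (deriv u) atTop (nhds 1))
    (hscat : Tendsto (fun r => r - u r / deriv u r) atTop (nhds a)) :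
    ∀ r, 0 < r →
      u r ≤ r ∧ 0 ≤ u r ∧ 0 ≤ deriv u r ∧ deriv u r ≤ 1 ∧
      (a < r → r - a ≤ u r ∧ 1 - a / r ≤ deriv u r) :=
  stmt_4_general v u a hv hu h0 hODE hnorm hscat
end

section
/- Spruch–Rosenberg inequality: for a nonnegative spherically symmetric potential v, the scattering length satisfies a ≤ ½ ∫₀^∞ v(r) r² dr. -/
/-!
Write `h(r) = r - u(r)/u'(r)`, so that `a = lim h`. Where `u, u' > 0` we have
`h' = u u''/u'² = (v/2)(u/u')²`, and convexity of `u` together with `u(0) = 0` gives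
`0 ≤ u/u' ≤ r`; hence `0 ≤ h' ≤ v r²/2`, and integrating `h'` bounds `a` by `½ ∫₀^∞ v r² dr`.

It remains to see that `u' > 0` on `(0, ∞)` when `∫ v r²` is finite. Otherwise `u'` has a last
zero `T > 0`. As `(u u')' = u'² + v u²/2 ≥ 0` and `u u'` vanishes at `0` and at `T`, the
function `u²` is nonincreasing on `[0, T]`, so `u(T) = 0` as well. But then integrating
`u'' = v u/2` from `T` gives `u'(r) ≤ C (r - T) u'(r)` with `C` finite since `T > 0`, which is
absurd for `r` close to `T`.
-/

open Filter MeasureTheory Set Topology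

lemma exists_last_zero_of_eventually_pos {f : ℝ → ℝ} (hf : Continuous f)
    (hpos : ∀ᶠ r in atTop, 0 < f r) {r₀ : ℝ} (h₀ : f r₀ ≤ 0) :
    ∃ T, r₀ ≤ T ∧ f T = 0 ∧ ∀ r, T < r → 0 < f r := by
  set S := Ici r₀ ∩ f ⁻¹' Iic 0
  have hS : IsClosed S := isClosed_Ici.inter (isClosed_Iic.preimage hf)
  obtain ⟨B, hB⟩ := hpos.exists_forall_of_atTop
  have hbdd : BddAbove S := ⟨B, fun x hx => not_lt.mp fun hBx => (hB x hBx.le).not_ge hx.2⟩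
  have hTS : sSup S ∈ S := hS.csSup_mem ⟨r₀, self_mem_Ici, h₀⟩ hbdd
  have hright : ∀ r, sSup S < r → 0 < f r := fun r hr =>
    not_le.mp fun hfr => (le_csSup hbdd ⟨hTS.1.trans hr.le, hfr⟩).not_gt hr
  refine ⟨sSup S, hTS.1, le_antisymm hTS.2 ?_, hright⟩
  exact ge_of_tendsto (hf.continuousWithinAt (s := Ioi (sSup S)))
    (eventually_nhdsWithin_of_forall fun r hr => (hright r hr).le)

lemma strictMonoOn_Ici_of_deriv_pos {f : ℝ → ℝ} (hf : Continuous f) {T : ℝ}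
    (hpos : ∀ x, T < x → 0 < deriv f x) : StrictMonoOn f (Ici T) :=
  strictMonoOn_of_deriv_pos (convex_Ici T) hf.continuousOn fun x hx =>
    hpos x (by rwa [interior_Ici] at hx)

lemma ConvexOn.sub_le_mul_deriv {S : Set ℝ} {f : ℝ → ℝ} (hf : ConvexOn ℝ S f) {x y : ℝ}
    (hx : x ∈ S) (hy : y ∈ S) (hxy : x < y) (hd : DifferentiableAt ℝ f y) :
    f y - f x ≤ (y - x) * deriv f y := by
  have := hf.slope_le_deriv hx hy hxy hd
  rwa [slope_def_field, div_le_iff₀' (sub_pos.mpr hxy)] at this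

lemma ofReal_sub_le_setLIntegral_of_hasDerivAt {f f' : ℝ → ℝ} {g : ℝ → ENNReal} {a b : ℝ}
    (hab : a ≤ b) (hcont : ContinuousOn f (Icc a b))
    (hderiv : ∀ x ∈ Ioo a b, HasDerivAt f (f' x) x) (hnonneg : ∀ x ∈ Ioc a b, 0 ≤ f' x)
    (hg : ∀ x ∈ Ioc a b, ENNReal.ofReal (f' x) ≤ g x) :
    ENNReal.ofReal (f b - f a) ≤ ∫⁻ x in Ioc a b, g x := by
  have hint : IntegrableOn f' (Ioc a b) :=
    intervalIntegral.integrableOn_deriv_of_nonneg hcont hderiv fun x hx =>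
      hnonneg x (Ioo_subset_Ioc_self hx)
  rw [← intervalIntegral.integral_eq_sub_of_hasDerivAt_of_le hab hcont hderiv
    ((intervalIntegrable_iff_integrableOn_Ioc_of_le hab).mpr hint),
    intervalIntegral.integral_of_le hab, ofReal_integral_eq_lintegral_ofReal hint
    ((ae_restrict_iff' measurableSet_Ioc).mpr (ae_of_all _ hnonneg))]
  exact setLIntegral_mono' measurableSet_Ioc hg

lemma hasDerivAt_sub_div_deriv {u : ℝ → ℝ} {r : ℝ} (hu : DifferentiableAt ℝ u r)
    (hu' : DifferentiableAt ℝ (deriv u) r) (hr : deriv u r ≠ 0) :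
    HasDerivAt (fun r => r - u r / deriv u r) (u r * deriv (deriv u) r / deriv u r ^ 2) r :=
  ((hasDerivAt_id r).sub (hu.hasDerivAt.div hu'.hasDerivAt hr)).congr_deriv (by field_simp; ring)

namespace ZeroEnergy

variable {v u : ℝ → ℝ}

lemma monotoneOn_mul_deriv (hv : ∀ r, 0 < r → 0 ≤ v r) (hu : ContDiff ℝ 2 u)
    (hODE : ∀ r, 0 < r → deriv (deriv u) r = (1 / 2) * v r * u r) :
    MonotoneOn (fun r => u r * deriv u r) (Ici 0) := by
  have hd : ∀ x, HasDerivAt (fun r => u r * deriv u r)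
      (deriv u x * deriv u x + u x * deriv (deriv u) x) x := fun x =>
    ((hu.differentiable two_ne_zero) x).hasDerivAt.mul (hu.differentiable_deriv_two x).hasDerivAt
  refine monotoneOn_of_deriv_nonneg (convex_Ici 0)
    (fun x _ => (hd x).continuousAt.continuousWithinAt)
    (fun x _ => (hd x).differentiableAt.differentiableWithinAt) fun x hx => ?_
  rw [interior_Ici] at hx
  rw [(hd x).deriv, hODE x hx]
  have := hv x hx
  nlinarith [mul_self_nonneg (deriv u x), mul_nonneg this (mul_self_nonneg (u x))]

lemma eq_zero_of_deriv_eq_zero (hv : ∀ r, 0 < r → 0 ≤ v r) (hu : ContDiff ℝ 2 u)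
    (h0 : u 0 = 0) (hODE : ∀ r, 0 < r → deriv (deriv u) r = (1 / 2) * v r * u r) {T : ℝ}
    (hT : 0 ≤ T) (hT' : deriv u T = 0) : u T = 0 := by
  have hd : ∀ x, HasDerivAt (fun r => u r * u r) (2 * (u x * deriv u x)) x := fun x => by
    have hux := ((hu.differentiable two_ne_zero) x).hasDerivAt
    exact (hux.mul hux).congr_deriv (by ring)
  have hanti : AntitoneOn (fun r => u r * u r) (Icc 0 T) := by
    refine antitoneOn_of_deriv_nonpos (convex_Icc 0 T)
      (fun x _ => (hd x).continuousAt.continuousWithinAt)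
      (fun x _ => (hd x).differentiableAt.differentiableWithinAt) fun x hx => ?_
    rw [interior_Icc] at hx
    have := monotoneOn_mul_deriv hv hu hODE hx.1.le hT hx.2.le
    simp only [hT', mul_zero] at this
    rw [(hd x).deriv]
    linarith
  have := hanti ⟨le_rfl, hT⟩ ⟨hT, le_rfl⟩ hT
  simp only [h0, mul_zero] at this
  exact mul_self_eq_zero.mp (le_antisymm this (mul_self_nonneg _))

lemma convexOn_Ici_of_nonneg (hv : ∀ r, 0 < r → 0 ≤ v r) (hu : ContDiff ℝ 2 u)
    (hODE : ∀ r, 0 < r → deriv (deriv u) r = (1 / 2) * v r * u r) {T : ℝ} (hT : 0 ≤ T)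
    (hnn : ∀ r, T < r → 0 ≤ u r) : ConvexOn ℝ (Ici T) u := by
  refine convexOn_of_deriv2_nonneg (convex_Ici T) hu.continuous.continuousOn
    (hu.differentiable two_ne_zero).differentiableOn hu.differentiable_deriv_two.differentiableOn
    fun x hx => ?_
  rw [interior_Ici] at hx
  have hx0 : 0 < x := hT.trans_lt hx
  rw [Function.iterate_succ_apply, Function.iterate_one, hODE x hx0]
  exact mul_nonneg (mul_nonneg (by norm_num) (hv x hx0)) (hnn x hx)

lemma pos_and_le_sub_mul_deriv (hv : ∀ r, 0 < r → 0 ≤ v r) (hu : ContDiff ℝ 2 u)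
    (hODE : ∀ r, 0 < r → deriv (deriv u) r = (1 / 2) * v r * u r) {T : ℝ} (hT : 0 ≤ T)
    (huT : u T = 0) (hpos : ∀ r, T < r → 0 < deriv u r) {r : ℝ} (hr : T < r) :
    0 < u r ∧ u r ≤ (r - T) * deriv u r := by
  have hupos : ∀ r, T < r → 0 < u r := fun r hr =>
    huT ▸ strictMonoOn_Ici_of_deriv_pos hu.continuous hpos self_mem_Ici hr.le hr
  refine ⟨hupos r hr, ?_⟩
  simpa [huT] using (convexOn_Ici_of_nonneg hv hu hODE hT fun r hr => (hupos r hr).le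
    ).sub_le_mul_deriv self_mem_Ici hr.le hr (hu.differentiable two_ne_zero r)

lemma ofReal_deriv_le_mul_lintegral (hv : ∀ r, 0 < r → 0 ≤ v r) (hu : ContDiff ℝ 2 u)
    (hODE : ∀ r, 0 < r → deriv (deriv u) r = (1 / 2) * v r * u r) {T : ℝ} (hT : 0 < T)
    (huT : u T = 0) (hu'T : deriv u T = 0) (hpos : ∀ r, T < r → 0 < deriv u r) {r : ℝ}
    (hr : T < r) :
    ENNReal.ofReal (deriv u r) ≤
      ENNReal.ofReal (u r / (2 * T ^ 2)) * ∫⁻ r in Ioi 0, ENNReal.ofReal (v r * r ^ 2) := by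
  have hmono := strictMonoOn_Ici_of_deriv_pos hu.continuous hpos
  have hupos s (hs : T < s) := (pos_and_le_sub_mul_deriv hv hu hODE hT.le huT hpos hs).1
  have hur := (hupos r hr).le
  have hpt : ∀ s ∈ Ioc T r, 0 ≤ deriv (deriv u) s ∧
      deriv (deriv u) s ≤ u r / (2 * T ^ 2) * (v s * s ^ 2) := fun s hs => by
    have hs0 : 0 < s := hT.trans hs.1
    have hvs := hv s hs0
    rw [hODE s hs0]
    refine ⟨by have := (hupos s hs.1).le; positivity, ?_⟩
    calc 1 / 2 * v s * u s ≤ 1 / 2 * v s * u r := by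
          gcongr; exact hmono.monotoneOn hs.1.le hr.le hs.2
      _ = u r / (2 * T ^ 2) * (v s * T ^ 2) := by field_simp
      _ ≤ u r / (2 * T ^ 2) * (v s * s ^ 2) := by gcongr; exact hs.1.le
  have hftc := ofReal_sub_le_setLIntegral_of_hasDerivAt
    (g := fun s => ENNReal.ofReal (u r / (2 * T ^ 2)) * ENNReal.ofReal (v s * s ^ 2)) hr.le
    (hu.continuous_deriv one_le_two).continuousOn
    (fun x _ => (hu.differentiable_deriv_two x).hasDerivAt) (fun s hs => (hpt s hs).1)
    fun s hs => by
      rw [← ENNReal.ofReal_mul (by positivity)]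
      exact ENNReal.ofReal_le_ofReal (hpt s hs).2
  rw [hu'T, sub_zero, lintegral_const_mul' _ _ ENNReal.ofReal_ne_top] at hftc
  exact hftc.trans (by gcongr; exact fun s hs => hT.trans hs.1)

lemma lintegral_eq_top_of_eq_zero_of_deriv_eq_zero (hv : ∀ r, 0 < r → 0 ≤ v r)
    (hu : ContDiff ℝ 2 u) (hODE : ∀ r, 0 < r → deriv (deriv u) r = (1 / 2) * v r * u r)
    {T : ℝ} (hT : 0 < T) (huT : u T = 0) (hu'T : deriv u T = 0)
    (hpos : ∀ r, T < r → 0 < deriv u r) :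
    ∫⁻ r in Ioi 0, ENNReal.ofReal (v r * r ^ 2) = ⊤ := by
  by_contra hL
  set K := (∫⁻ r in Ioi 0, ENNReal.ofReal (v r * r ^ 2)).toReal
  have hK : 0 ≤ K := ENNReal.toReal_nonneg
  set r := T + T ^ 2 / (K + 1)
  have hr : T < r := lt_add_of_pos_right T (by positivity)
  obtain ⟨hur, hconvex⟩ := pos_and_le_sub_mul_deriv hv hu hODE hT.le huT hpos hr
  have hupper : deriv u r ≤ u r / (2 * T ^ 2) * K := by
    have := ofReal_deriv_le_mul_lintegral hv hu hODE hT huT hu'T hpos hr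
    rwa [← ENNReal.ofReal_toReal hL, ← ENNReal.ofReal_mul (by positivity),
      ENNReal.ofReal_le_ofReal_iff (by positivity)] at this
  have hcontra : deriv u r < deriv u r := calc
    deriv u r ≤ u r / (2 * T ^ 2) * K := hupper
    _ ≤ (r - T) * deriv u r / (2 * T ^ 2) * K := by gcongr
    _ = deriv u r * (K / (2 * (K + 1))) := by simp only [r]; field_simp; ring
    _ < deriv u r := mul_lt_of_lt_one_right (hpos r hr)
        (by rw [div_lt_one (by positivity)]; linarith)
  exact hcontra.false

lemma deriv_pos_of_lintegral_ne_top (hv : ∀ r, 0 < r → 0 ≤ v r) (hu : ContDiff ℝ 2 u)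
    (h0 : u 0 = 0) (hODE : ∀ r, 0 < r → deriv (deriv u) r = (1 / 2) * v r * u r)
    (hnorm : Tendsto (deriv u) atTop (𝓝 1))
    (hL : ∫⁻ r in Ioi 0, ENNReal.ofReal (v r * r ^ 2) ≠ ⊤) {r : ℝ} (hr : 0 < r) :
    0 < deriv u r := by
  by_contra! hr'
  obtain ⟨T, hrT, hT, hTpos⟩ := exists_last_zero_of_eventually_pos
    (hu.continuous_deriv one_le_two) (hnorm.eventually (lt_mem_nhds one_pos)) hr'
  exact hL (lintegral_eq_top_of_eq_zero_of_deriv_eq_zero hv hu hODE (hr.trans_le hrT)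
    (eq_zero_of_deriv_eq_zero hv hu h0 hODE (hr.le.trans hrT) hT) hT hTpos)

lemma mul_deriv_deriv_div_sq_mem_Icc (hv : ∀ r, 0 < r → 0 ≤ v r)
    (hODE : ∀ r, 0 < r → deriv (deriv u) r = (1 / 2) * v r * u r) {r : ℝ} (hr : 0 < r)
    (hu : 0 ≤ u r) (hu' : 0 < deriv u r) (hle : u r ≤ r * deriv u r) :
    u r * deriv (deriv u) r / deriv u r ^ 2 ∈ Icc 0 (2⁻¹ * (v r * r ^ 2)) := by
  have hratio : u r * deriv (deriv u) r / deriv u r ^ 2 = 2⁻¹ * v r * (u r / deriv u r) ^ 2 := by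
    rw [hODE r hr]; field_simp
  have hdiv : u r / deriv u r ≤ r := by rwa [div_le_iff₀ hu']
  have := hv r hr
  rw [hratio, mul_assoc]
  exact ⟨by positivity, by gcongr⟩

lemma ofReal_sub_div_deriv_le (hv : ∀ r, 0 < r → 0 ≤ v r) (hu : ContDiff ℝ 2 u)
    (h0 : u 0 = 0) (hODE : ∀ r, 0 < r → deriv (deriv u) r = (1 / 2) * v r * u r)
    (hpos : ∀ r, 0 < r → 0 < deriv u r) {ε R : ℝ} (hε : 0 < ε) (hεR : ε ≤ R) :
    ENNReal.ofReal (R - u R / deriv u R) ≤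
      ENNReal.ofReal ε + 2⁻¹ * ∫⁻ r in Ioi 0, ENNReal.ofReal (v r * r ^ 2) := by
  have hu_bounds r (hr : 0 < r) := pos_and_le_sub_mul_deriv hv hu hODE le_rfl h0 hpos hr
  have hderiv r (hr : 0 < r) := hasDerivAt_sub_div_deriv (hu.differentiable two_ne_zero r)
    (hu.differentiable_deriv_two r) (hpos r hr).ne'
  have hpt r (hr : 0 < r) := mul_deriv_deriv_div_sq_mem_Icc hv hODE hr (hu_bounds r hr).1.le
    (hpos r hr) (by simpa using (hu_bounds r hr).2)
  have hincrement := ofReal_sub_le_setLIntegral_of_hasDerivAt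
    (g := fun r => 2⁻¹ * ENNReal.ofReal (v r * r ^ 2)) hεR
    (fun x hx => (hderiv x (hε.trans_le hx.1)).continuousAt.continuousWithinAt)
    (fun x hx => hderiv x (hε.trans hx.1)) (fun x hx => (hpt x (hε.trans hx.1)).1)
    fun x hx => by
      rw [← ENNReal.ofReal_ofNat 2, ← ENNReal.ofReal_inv_of_pos two_pos,
        ← ENNReal.ofReal_mul (by norm_num)]
      exact ENNReal.ofReal_le_ofReal (hpt x (hε.trans hx.1)).2
  rw [lintegral_const_mul' _ _ (by norm_num)] at hincrement
  have hstart : ε - u ε / deriv u ε ≤ ε :=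
    sub_le_self _ (div_nonneg (hu_bounds ε hε).1.le (hpos ε hε).le)
  calc ENNReal.ofReal (R - u R / deriv u R)
      ≤ ENNReal.ofReal (ε - u ε / deriv u ε) +
          ENNReal.ofReal ((R - u R / deriv u R) - (ε - u ε / deriv u ε)) := by
        convert ENNReal.ofReal_add_le using 2
        ring
    _ ≤ ENNReal.ofReal ε + 2⁻¹ * ∫⁻ r in Ioi 0, ENNReal.ofReal (v r * r ^ 2) := by
        refine add_le_add (ENNReal.ofReal_le_ofReal hstart) (hincrement.trans ?_)
        gcongr
        exact fun x hx => hε.trans hx.1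

end ZeroEnergy

/-- Spruch–Rosenberg inequality: the scattering length of a nonnegative
spherically symmetric potential satisfies `a ≤ ½ ∫₀^∞ v(r) r² dr`. -/
theorem stmt_5 (v u : ℝ → ℝ) (a : ℝ)
    (hv : ∀ r, 0 < r → 0 ≤ v r)
    (hu : ContDiff ℝ 2 u) (h0 : u 0 = 0)
    (hODE : ∀ r, 0 < r → deriv (deriv u) r = (1 / 2) * v r * u r)
    (hnorm : Tendsto (deriv u) atTop (nhds 1))
    (hscat : Tendsto (fun r => r - u r / deriv u r) atTop (nhds a)) :
    ENNReal.ofReal a ≤ 2⁻¹ * ∫⁻ r in Set.Ioi (0 : ℝ), ENNReal.ofReal (v r * r ^ 2) := by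
  by_cases hL : ∫⁻ r in Ioi (0 : ℝ), ENNReal.ofReal (v r * r ^ 2) = ⊤
  · simp [hL]
  have hpos r (hr : 0 < r) := ZeroEnergy.deriv_pos_of_lintegral_ne_top hv hu h0 hODE hnorm hL hr
  refine ENNReal.le_of_forall_pos_le_add fun ε hε _ => ?_
  rw [add_comm, ← ENNReal.ofReal_coe_nnreal]
  refine le_of_tendsto ((ENNReal.continuous_ofReal.tendsto a).comp hscat) ?_
  filter_upwards [eventually_ge_atTop (ε : ℝ)] with R hR
  exact ZeroEnergy.ofReal_sub_div_deriv_le hv hu h0 hODE hpos hε hR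
end

section
/- Truncation bound for the scattering length: if ṽ(r) = v(r)·1_{r ≤ R̃} is the truncation of v at radius R̃, with scattering length ã, then 0 ≤ a - ã ≤ ½ ∫_{R̃}^∞ v(r) r² dr. -/
/-!
Once `u ≥ 0` (the ODE makes `(u u')' ≥ 0`, so `|u|` is nondecreasing), `u'' = v u / 2 ≥ 0` and
`u` is convex, whence `u(x) - u(y) ≤ (x - y) u'(x)`. For `h(r) = r - u/u'` this gives
`h' = v u² / (2 u'²) ≤ v r² / 2`, and integrating over `(R̃, ∞)` bounds `a - h(R̃)`. Beyond `R̃`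
the truncated solution is affine, so `ã = R̃ - ũ(R̃)`, and the Wronskian of `u` and `ũ`, constant
on `[0, R̃]`, turns this into `ã = h(R̃)` and into `ã ≤ h(r)` for large `r`.
If `u'(R̃) = 0`, let `s ≥ R̃` be the last zero of `u'`; then `u(s) = 0`, and
`u'(x) = ∫_s^x v u / 2 ≤ (x - s) u'(x) ∫_s^x v / 2` forces `∫_s^x v ≥ 2 / (x - s)`, so the right-hand
side is infinite.
-/

open Filter MeasureTheory Set Topology

theorem ContDiff.differentiable_deriv_of_two {f : ℝ → ℝ} (hf : ContDiff ℝ 2 f) :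
    Differentiable ℝ (deriv f) :=
  (contDiff_succ_iff_deriv.mp hf).2.2.differentiable one_ne_zero

theorem ContDiff.continuous_deriv_deriv_of_two {f : ℝ → ℝ} (hf : ContDiff ℝ 2 f) :
    Continuous (deriv (deriv f)) :=
  (contDiff_succ_iff_deriv.mp hf).2.2.continuous_deriv le_rfl

theorem tendsto_atTop_of_tendsto_deriv {f : ℝ → ℝ} {c : ℝ} (hf : Differentiable ℝ f)
    (hc : 0 < c) (h : Tendsto (deriv f) atTop (𝓝 c)) : Tendsto f atTop atTop := by
  obtain ⟨N, hN⟩ := eventually_atTop.mp (h.eventually (eventually_ge_nhds (half_lt_self hc)))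
  have hmono : MonotoneOn (fun x => f x - c / 2 * x) (Ici N) := by
    have hd : ∀ x, HasDerivAt (fun x => f x - c / 2 * x) (deriv f x - c / 2) x := fun x =>
      ((hf x).hasDerivAt.fun_sub ((hasDerivAt_id' x).const_mul (c / 2))).congr_deriv (by ring)
    refine monotoneOn_of_deriv_nonneg (convex_Ici N)
      (fun x _ => (hd x).continuousAt.continuousWithinAt)
      (fun x _ => (hd x).differentiableAt.differentiableWithinAt) fun x hx => ?_
    rw [interior_Ici] at hx
    rw [(hd x).deriv]
    linarith [hN x hx.le]
  refine tendsto_atTop_mono' atTop ?_ (tendsto_atTop_add_const_left atTop (f N - c / 2 * N)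
    (tendsto_id.const_mul_atTop (half_pos hc)))
  filter_upwards [eventually_ge_atTop N] with x hx
  have := hmono self_mem_Ici hx hx
  simp only [id] at this ⊢
  linarith

theorem ofReal_sub_eq_lintegral_of_hasDerivAt {f f' : ℝ → ℝ} {a b : ℝ} (hab : a ≤ b)
    (hf : ∀ x ∈ Icc a b, HasDerivAt f (f' x) x) (hf' : ContinuousOn f' (Icc a b))
    (hf'_nonneg : ∀ x ∈ Ioc a b, 0 ≤ f' x) :
    ENNReal.ofReal (f b - f a) = ∫⁻ x in Ioc a b, ENNReal.ofReal (f' x) := by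
  rw [← intervalIntegral.integral_eq_sub_of_hasDerivAt
      (fun x hx => hf x (by rwa [uIcc_of_le hab] at hx)) (hf'.intervalIntegrable_of_Icc hab),
    intervalIntegral.integral_of_le hab]
  exact ofReal_integral_eq_lintegral_ofReal (hf'.integrableOn_Icc.mono_set Ioc_subset_Icc_self)
    ((ae_restrict_iff' measurableSet_Ioc).2 (ae_of_all _ hf'_nonneg))

theorem eq_of_deriv_eq_zero_of_tendsto {f : ℝ → ℝ} {R l x : ℝ} (hf : Differentiable ℝ f)
    (h : ∀ y, R < y → deriv f y = 0) (hl : Tendsto f atTop (𝓝 l)) (hx : R ≤ x) : f x = l := by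
  refine tendsto_nhds_unique (tendsto_const_nhds.congr' ?_) hl
  filter_upwards [eventually_gt_atTop x] with y hy
  obtain ⟨c, hc, hc'⟩ := exists_hasDerivAt_eq_slope f (deriv f) hy hf.continuous.continuousOn
    fun z _ => (hf z).hasDerivAt
  rw [h c (hx.trans_lt hc.1), eq_comm, div_eq_zero_iff, sub_eq_zero] at hc'
  exact (hc'.resolve_right (sub_ne_zero.mpr hy.ne')).symm

theorem deriv_eq_one_of_deriv_deriv_eq_zero {w : ℝ → ℝ} {R x : ℝ} (hw : ContDiff ℝ 2 w)
    (h : ∀ y, R < y → deriv (deriv w) y = 0) (h1 : Tendsto (deriv w) atTop (𝓝 1))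
    (hx : R ≤ x) : deriv w x = 1 :=
  eq_of_deriv_eq_zero_of_tendsto hw.differentiable_deriv_of_two h h1 hx

theorem eq_sub_of_deriv_deriv_eq_zero {w : ℝ → ℝ} {R b : ℝ} (hw : ContDiff ℝ 2 w)
    (h : ∀ y, R < y → deriv (deriv w) y = 0) (h1 : Tendsto (deriv w) atTop (𝓝 1))
    (hb : Tendsto (fun r => r - w r / deriv w r) atTop (𝓝 b)) : b = R - w R := by
  have hw1 : ∀ y, R ≤ y → deriv w y = 1 := fun y hy =>
    deriv_eq_one_of_deriv_deriv_eq_zero hw h h1 hy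
  have hdiff : Differentiable ℝ fun r => r - w r :=
    differentiable_id.sub (hw.differentiable two_ne_zero)
  refine (eq_of_deriv_eq_zero_of_tendsto hdiff (fun y hy => ?_) (hb.congr' ?_) le_rfl).symm
  · rw [((hasDerivAt_id' y).fun_sub (hw.differentiable two_ne_zero y).hasDerivAt).deriv,
      hw1 y hy.le, sub_self]
  · filter_upwards [eventually_ge_atTop R] with y hy
    rw [hw1 y hy, div_one]

theorem wronskian_eq_zero {q u w : ℝ → ℝ} {R : ℝ} (hR : 0 < R) (hu : ContDiff ℝ 2 u)
    (hw : ContDiff ℝ 2 w) (hu0 : u 0 = 0) (hw0 : w 0 = 0)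
    (hqu : ∀ r ∈ Ioo 0 R, deriv (deriv u) r = q r * u r)
    (hqw : ∀ r ∈ Ioo 0 R, deriv (deriv w) r = q r * w r) :
    u R * deriv w R = deriv u R * w R := by
  have hu' := hu.differentiable_deriv_of_two
  have hw' := hw.differentiable_deriv_of_two
  have hu1 := hu.differentiable two_ne_zero
  have hw1 := hw.differentiable two_ne_zero
  have hW : ∀ r, HasDerivAt (fun r => u r * deriv w r - deriv u r * w r)
      (u r * deriv (deriv w) r - deriv (deriv u) r * w r) r := fun r =>
    (((hu1 r).hasDerivAt.fun_mul (hw' r).hasDerivAt).fun_sub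
      ((hu' r).hasDerivAt.fun_mul (hw1 r).hasDerivAt)).congr_deriv (by ring)
  obtain ⟨c, hc, hc'⟩ := exists_hasDerivAt_eq_slope _ _ hR
    (fun r _ => (hW r).continuousAt.continuousWithinAt) fun r _ => hW r
  rw [hqu c hc, hqw c hc, hu0, hw0, eq_div_iff (by linarith)] at hc'
  linear_combination -hc'

/-- For `u' R ≠ 0`, the scattering length of the potential cut off at `R` (the paper's `h`). -/
noncomputable def truncatedScatteringLength (u : ℝ → ℝ) (R : ℝ) : ℝ := R - u R / deriv u R

structure IsScatteringSolution (v u : ℝ → ℝ) : Prop where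
  potential_nonneg : ∀ r, 0 < r → 0 ≤ v r
  contDiff : ContDiff ℝ 2 u
  apply_zero : u 0 = 0
  deriv_deriv : ∀ r, 0 < r → deriv (deriv u) r = 1 / 2 * v r * u r
  tendsto_deriv : Tendsto (deriv u) atTop (𝓝 1)

namespace IsScatteringSolution

variable {v u : ℝ → ℝ}

theorem differentiable (hu : IsScatteringSolution v u) : Differentiable ℝ u :=
  hu.contDiff.differentiable two_ne_zero

theorem differentiable_deriv (hu : IsScatteringSolution v u) : Differentiable ℝ (deriv u) :=
  hu.contDiff.differentiable_deriv_of_two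

theorem continuous_deriv_deriv (hu : IsScatteringSolution v u) : Continuous (deriv (deriv u)) :=
  hu.contDiff.continuous_deriv_deriv_of_two

theorem deriv_deriv_nonneg_of_nonneg (hu : IsScatteringSolution v u) {r : ℝ} (hr : 0 < r)
    (hur : 0 ≤ u r) : 0 ≤ deriv (deriv u) r := by
  rw [hu.deriv_deriv r hr]
  have := hu.potential_nonneg r hr
  positivity

theorem monotoneOn_sq (hu : IsScatteringSolution v u) : MonotoneOn (fun x => u x ^ 2) (Ici 0) := by
  have hd : ∀ x, HasDerivAt (fun x => u x * deriv u x)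
      (deriv u x ^ 2 + u x * deriv (deriv u) x) x := fun x =>
    ((hu.differentiable x).hasDerivAt.fun_mul (hu.differentiable_deriv x).hasDerivAt).congr_deriv
      (by ring)
  have hmul : MonotoneOn (fun x => u x * deriv u x) (Ici 0) := by
    refine monotoneOn_of_deriv_nonneg (convex_Ici 0)
      (fun x _ => (hd x).continuousAt.continuousWithinAt)
      (fun x _ => (hd x).differentiableAt.differentiableWithinAt) fun x hx => ?_
    rw [interior_Ici] at hx
    rw [(hd x).deriv, hu.deriv_deriv x hx]
    nlinarith [sq_nonneg (deriv u x), mul_nonneg (hu.potential_nonneg x hx) (sq_nonneg (u x))]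
  have hsq : ∀ x, HasDerivAt (fun x => u x ^ 2) (2 * (u x * deriv u x)) x := fun x =>
    ((hu.differentiable x).hasDerivAt.pow 2).congr_deriv (by ring)
  refine monotoneOn_of_deriv_nonneg (convex_Ici 0)
    (fun x _ => (hsq x).continuousAt.continuousWithinAt)
    (fun x _ => (hsq x).differentiableAt.differentiableWithinAt) fun x hx => ?_
  rw [interior_Ici] at hx
  have := hmul self_mem_Ici (mem_Ici.mpr hx.le) hx.le
  simp only [hu.apply_zero, zero_mul] at this
  rw [(hsq x).deriv]
  linarith

theorem nonneg (hu : IsScatteringSolution v u) {x : ℝ} (hx : 0 ≤ x) : 0 ≤ u x := by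
  by_contra! hneg
  obtain ⟨M, hM, hxM⟩ := ((tendsto_atTop_of_tendsto_deriv hu.differentiable one_pos
    hu.tendsto_deriv).eventually_gt_atTop 0 |>.and (eventually_ge_atTop x)).exists
  obtain ⟨z, hz, huz⟩ := intermediate_value_Icc hxM hu.differentiable.continuous.continuousOn
    ⟨hneg.le, hM.le⟩
  have := hu.monotoneOn_sq hx (hx.trans hz.1) hz.1
  simp only [huz] at this
  nlinarith

theorem convexOn (hu : IsScatteringSolution v u) : ConvexOn ℝ (Ici 0) u := by
  refine convexOn_of_deriv2_nonneg (convex_Ici 0) hu.differentiable.continuous.continuousOn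
    hu.differentiable.differentiableOn hu.differentiable_deriv.differentiableOn fun x hx => ?_
  rw [interior_Ici] at hx
  exact hu.deriv_deriv_nonneg_of_nonneg hx (hu.nonneg hx.le)

theorem monotoneOn_deriv (hu : IsScatteringSolution v u) : MonotoneOn (deriv u) (Ici 0) :=
  hu.convexOn.monotoneOn_deriv fun x _ => hu.differentiable x

theorem sub_le_mul_deriv (hu : IsScatteringSolution v u) {x y : ℝ} (hy : 0 ≤ y) (hyx : y ≤ x) :
    u x - u y ≤ (x - y) * deriv u x := by
  rcases hyx.eq_or_lt with rfl | hlt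
  · simp
  have := hu.convexOn.slope_le_deriv hy (hy.trans hyx) hlt (hu.differentiable x)
  rwa [slope_def_field, div_le_iff₀ (sub_pos.mpr hlt), mul_comm] at this

theorem deriv_nonneg (hu : IsScatteringSolution v u) {x : ℝ} (hx : 0 < x) : 0 ≤ deriv u x := by
  have := hu.sub_le_mul_deriv le_rfl hx.le
  rw [hu.apply_zero, sub_zero, sub_zero] at this
  exact nonneg_of_mul_nonneg_right ((hu.nonneg hx.le).trans this) hx

theorem monotoneOn (hu : IsScatteringSolution v u) : MonotoneOn u (Ici 0) :=
  monotoneOn_of_deriv_nonneg (convex_Ici 0) hu.differentiable.continuous.continuousOn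
    hu.differentiable.differentiableOn fun x hx => hu.deriv_nonneg (by simpa using hx)

theorem ofReal_deriv_le_mul_lintegral (hu : IsScatteringSolution v u) {s x : ℝ} (hs : 0 < s)
    (hus : u s = 0) (hu's : deriv u s = 0) (hsx : s ≤ x) :
    ENNReal.ofReal (deriv u x) ≤ ENNReal.ofReal ((x - s) * deriv u x / (2 * s ^ 2)) *
      ∫⁻ t in Ioc s x, ENNReal.ofReal (v t * t ^ 2) := by
  have hux : u x ≤ (x - s) * deriv u x := by
    simpa [hus] using hu.sub_le_mul_deriv hs.le hsx
  have hc : 0 ≤ (x - s) * deriv u x / (2 * s ^ 2) :=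
    div_nonneg ((hu.nonneg (hs.le.trans hsx)).trans hux) (by positivity)
  calc ENNReal.ofReal (deriv u x) = ENNReal.ofReal (deriv u x - deriv u s) := by
        rw [hu's, sub_zero]
    _ = ∫⁻ t in Ioc s x, ENNReal.ofReal (deriv (deriv u) t) :=
        ofReal_sub_eq_lintegral_of_hasDerivAt hsx
          (fun t _ => (hu.differentiable_deriv t).hasDerivAt)
          hu.continuous_deriv_deriv.continuousOn fun t ht =>
          hu.deriv_deriv_nonneg_of_nonneg (hs.trans ht.1) (hu.nonneg (hs.trans ht.1).le)
    _ ≤ ∫⁻ t in Ioc s x, ENNReal.ofReal ((x - s) * deriv u x / (2 * s ^ 2)) *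
          ENNReal.ofReal (v t * t ^ 2) := by
        refine setLIntegral_mono' measurableSet_Ioc fun t ht => ?_
        have ht0 : 0 < t := hs.trans ht.1
        have hut : u t ≤ (x - s) * deriv u x :=
          (hu.monotoneOn (mem_Ici.mpr ht0.le) (mem_Ici.mpr (ht0.le.trans ht.2)) ht.2).trans hux
        have hst : s ^ 2 ≤ t ^ 2 := pow_le_pow_left₀ hs.le ht.1.le 2
        rw [← ENNReal.ofReal_mul hc, hu.deriv_deriv t ht0]
        refine ENNReal.ofReal_le_ofReal ?_
        rw [div_mul_eq_mul_div ((x - s) * deriv u x), le_div_iff₀ (by positivity)]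
        nlinarith [mul_le_mul_of_nonneg_left (mul_le_mul hut hst (sq_nonneg s)
          ((hu.nonneg ht0.le).trans hut)) (hu.potential_nonneg t ht0)]
    _ = _ := lintegral_const_mul' _ _ ENNReal.ofReal_ne_top

theorem exists_deriv_eq_zero_of_deriv_nonpos (hu : IsScatteringSolution v u) {R : ℝ} (hR : 0 < R)
    (hR' : deriv u R ≤ 0) : ∃ s, R ≤ s ∧ deriv u s = 0 ∧ ∀ x, s < x → 0 < deriv u x := by
  set S := Ici R ∩ {x | deriv u x ≤ 0}
  have hclosed : IsClosed S :=
    isClosed_Ici.inter (isClosed_le hu.differentiable_deriv.continuous continuous_const)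
  obtain ⟨N, hN⟩ := eventually_atTop.mp (hu.tendsto_deriv.eventually (eventually_gt_nhds one_pos))
  have hbdd : BddAbove S := ⟨N, fun x hx => not_lt.mp fun h => (hN x h.le).not_ge hx.2⟩
  have hs := hclosed.csSup_mem ⟨R, self_mem_Ici, hR'⟩ hbdd
  refine ⟨sSup S, hs.1, le_antisymm hs.2 (hu.deriv_nonneg (hR.trans_le hs.1)), fun x hx => ?_⟩
  by_contra! h
  exact notMem_of_csSup_lt hx hbdd ⟨hs.1.trans hx.le, h⟩

theorem lintegral_eq_top_of_deriv_nonpos (hu : IsScatteringSolution v u) {R : ℝ} (hR : 0 < R)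
    (hR' : deriv u R ≤ 0) : ∫⁻ r in Ioi R, ENNReal.ofReal (v r * r ^ 2) = ⊤ := by
  obtain ⟨s, hRs, hs0, hspos⟩ := hu.exists_deriv_eq_zero_of_deriv_nonpos hR hR'
  have hs : 0 < s := hR.trans_le hRs
  have hus : u s = 0 := le_antisymm
    (by simpa [hu.apply_zero, hs0] using hu.sub_le_mul_deriv le_rfl hs.le) (hu.nonneg hs.le)
  by_contra hL
  set K := (∫⁻ r in Ioi R, ENNReal.ofReal (v r * r ^ 2)).toReal
  set x := s + s ^ 2 / (K + 1)
  have hK : 0 ≤ K := ENNReal.toReal_nonneg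
  have hsx : s < x := lt_add_of_pos_right s (by positivity)
  have hx := hspos x hsx
  have hc : 0 ≤ (x - s) * deriv u x / (2 * s ^ 2) := by positivity
  have key : ENNReal.ofReal (deriv u x) ≤ ENNReal.ofReal ((x - s) * deriv u x / (2 * s ^ 2) * K) :=
    calc ENNReal.ofReal (deriv u x)
        ≤ ENNReal.ofReal ((x - s) * deriv u x / (2 * s ^ 2)) *
          ∫⁻ t in Ioc s x, ENNReal.ofReal (v t * t ^ 2) :=
          hu.ofReal_deriv_le_mul_lintegral hs hus hs0 hsx.le
      _ ≤ ENNReal.ofReal ((x - s) * deriv u x / (2 * s ^ 2)) *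
          ∫⁻ t in Ioi R, ENNReal.ofReal (v t * t ^ 2) :=
          mul_le_mul_right (lintegral_mono_set fun t ht => hRs.trans_lt ht.1) _
      _ = _ := by rw [ENNReal.ofReal_mul hc, ENNReal.ofReal_toReal hL]
  rw [ENNReal.ofReal_le_ofReal_iff (by positivity)] at key
  have hxs : (x - s) * deriv u x / (2 * s ^ 2) * K = deriv u x * (K / (2 * (K + 1))) := by
    simp only [x, add_sub_cancel_left]
    field_simp
  rw [hxs] at key
  refine key.not_gt (mul_lt_of_lt_one_right hx ?_)
  rw [div_lt_one (by positivity)]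
  linarith

theorem hasDerivAt_truncatedScatteringLength (hu : IsScatteringSolution v u) {x : ℝ}
    (hx : deriv u x ≠ 0) :
    HasDerivAt (truncatedScatteringLength u) (u x * deriv (deriv u) x / deriv u x ^ 2) x :=
  ((hasDerivAt_id' x).fun_sub ((hu.differentiable x).hasDerivAt.fun_div
    (hu.differentiable_deriv x).hasDerivAt hx)).congr_deriv (by field_simp; ring)

theorem sub_le_truncatedScatteringLength (hu : IsScatteringSolution v u) {R x w : ℝ} (hR : 0 ≤ R)
    (hRx : R ≤ x) (hx : 0 < deriv u x) (hw : 0 ≤ w) (huR : u R = deriv u R * w) :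
    R - w ≤ truncatedScatteringLength u x := by
  have hux := hu.sub_le_mul_deriv hR hRx
  have hmono := hu.monotoneOn_deriv (mem_Ici.mpr hR) (mem_Ici.mpr (hR.trans hRx)) hRx
  have : u x / deriv u x ≤ w + (x - R) := by
    rw [div_le_iff₀ hx]
    nlinarith [mul_le_mul_of_nonneg_right hmono hw]
  unfold truncatedScatteringLength
  linarith

theorem ofReal_truncatedScatteringLength_sub_le (hu : IsScatteringSolution v u) {R R' : ℝ}
    (hR : 0 < R) (hR' : 0 < deriv u R) (hRR' : R ≤ R') :
    ENNReal.ofReal (truncatedScatteringLength u R' - truncatedScatteringLength u R) ≤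
      2⁻¹ * ∫⁻ r in Ioi R, ENNReal.ofReal (v r * r ^ 2) := by
  have hpos : ∀ x ∈ Icc R R', 0 < deriv u x := fun x hx =>
    hR'.trans_le (hu.monotoneOn_deriv (mem_Ici.mpr hR.le) (mem_Ici.mpr (hR.le.trans hx.1)) hx.1)
  have hcont : ContinuousOn (fun x => u x * deriv (deriv u) x / deriv u x ^ 2) (Icc R R') :=
    (hu.differentiable.continuous.mul hu.continuous_deriv_deriv).continuousOn.div
      (hu.differentiable_deriv.continuous.pow 2).continuousOn
      fun x hx => pow_ne_zero 2 (hpos x hx).ne'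
  calc ENNReal.ofReal (truncatedScatteringLength u R' - truncatedScatteringLength u R)
      = ∫⁻ x in Ioc R R', ENNReal.ofReal (u x * deriv (deriv u) x / deriv u x ^ 2) :=
        ofReal_sub_eq_lintegral_of_hasDerivAt hRR'
          (fun x hx => hu.hasDerivAt_truncatedScatteringLength (hpos x hx).ne') hcont
          fun x hx => div_nonneg (mul_nonneg (hu.nonneg (hR.trans hx.1).le)
            (hu.deriv_deriv_nonneg_of_nonneg (hR.trans hx.1) (hu.nonneg (hR.trans hx.1).le)))
            (sq_nonneg _)
    _ ≤ ∫⁻ x in Ioc R R', 2⁻¹ * ENNReal.ofReal (v x * x ^ 2) := by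
        refine setLIntegral_mono' measurableSet_Ioc fun x hx => ?_
        have hx0 : 0 < x := hR.trans hx.1
        have hux : u x ≤ x * deriv u x := by
          simpa [hu.apply_zero] using hu.sub_le_mul_deriv le_rfl hx0.le
        have hsq : u x ^ 2 ≤ (x * deriv u x) ^ 2 := pow_le_pow_left₀ (hu.nonneg hx0.le) hux 2
        rw [← ENNReal.ofReal_ofNat 2, ← ENNReal.ofReal_inv_of_pos two_pos,
          ← ENNReal.ofReal_mul (by norm_num)]
        refine ENNReal.ofReal_le_ofReal ?_
        rw [hu.deriv_deriv x hx0, div_le_iff₀ (pow_pos (hpos x (Ioc_subset_Icc_self hx)) 2)]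
        nlinarith [mul_le_mul_of_nonneg_left hsq (hu.potential_nonneg x hx0)]
    _ = 2⁻¹ * ∫⁻ x in Ioc R R', ENNReal.ofReal (v x * x ^ 2) :=
        lintegral_const_mul' _ _ (by simp)
    _ ≤ 2⁻¹ * ∫⁻ r in Ioi R, ENNReal.ofReal (v r * r ^ 2) :=
        mul_le_mul_right (lintegral_mono_set Ioc_subset_Ioi_self) _

end IsScatteringSolution

/-- Truncation bound for the scattering length: if `ṽ = v·1_{r ≤ Rt}` has
scattering length `at'`, then `0 ≤ a - at' ≤ ½ ∫_{Rt}^∞ v(r) r² dr`. -/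
theorem stmt_6 (v u : ℝ → ℝ) (a : ℝ) (Rt : ℝ) (hR : 0 < Rt)
    (hv : ∀ r, 0 < r → 0 ≤ v r)
    (hu : ContDiff ℝ 2 u) (h0 : u 0 = 0)
    (hODE : ∀ r, 0 < r → deriv (deriv u) r = (1 / 2) * v r * u r)
    (hnorm : Tendsto (deriv u) atTop (nhds 1))
    (hscat : Tendsto (fun r => r - u r / deriv u r) atTop (nhds a))
    (ut : ℝ → ℝ) (at' : ℝ)
    (hut : ContDiff ℝ 2 ut) (h0' : ut 0 = 0)
    (hODE' : ∀ r, 0 < r →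
      deriv (deriv ut) r = (1 / 2) * (if r ≤ Rt then v r else 0) * ut r)
    (hnorm' : Tendsto (deriv ut) atTop (nhds 1))
    (hscat' : Tendsto (fun r => r - ut r / deriv ut r) atTop (nhds at')) :
    0 ≤ a - at' ∧
      ENNReal.ofReal (a - at')
        ≤ 2⁻¹ * ∫⁻ r in Set.Ioi Rt, ENNReal.ofReal (v r * r ^ 2) := by
  have hsol : IsScatteringSolution v u := ⟨hv, hu, h0, hODE, hnorm⟩
  have hsol' : IsScatteringSolution (fun r => if r ≤ Rt then v r else 0) ut :=
    ⟨fun r hr => by split_ifs <;> simp [hv r hr], hut, h0', hODE', hnorm'⟩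
  have hfree : ∀ r, Rt < r → deriv (deriv ut) r = 0 := fun r hr => by
    simp [hODE' r (hR.trans hr), hr.not_ge]
  have hat' : at' = Rt - ut Rt := eq_sub_of_deriv_deriv_eq_zero hut hfree hnorm' hscat'
  have hW : u Rt = deriv u Rt * ut Rt := by
    simpa [deriv_eq_one_of_deriv_deriv_eq_zero hut hfree hnorm' le_rfl] using
      wronskian_eq_zero hR hu hut h0 h0' (fun r hr => hODE r hr.1)
        (fun r hr => by simp [hODE' r hr.1, hr.2.le])
  have hle : at' ≤ a := by
    refine ge_of_tendsto hscat ?_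
    filter_upwards [eventually_ge_atTop Rt, hnorm.eventually (eventually_gt_nhds one_pos)]
      with x hx hx'
    rw [hat']
    exact hsol.sub_le_truncatedScatteringLength hR.le hx hx' (hsol'.nonneg hR.le) hW
  refine ⟨sub_nonneg.mpr hle, ?_⟩
  by_cases hL : ∫⁻ r in Ioi Rt, ENNReal.ofReal (v r * r ^ 2) = ⊤
  · simp [hL]
  have hpos : 0 < deriv u Rt :=
    lt_of_not_ge fun h => hL (hsol.lintegral_eq_top_of_deriv_nonpos hR h)
  have hRt : truncatedScatteringLength u Rt = at' := by
    rw [truncatedScatteringLength, hW, hat', mul_div_cancel_left₀ _ hpos.ne']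
  refine le_of_tendsto ((ENNReal.continuous_ofReal.tendsto _).comp (hscat.sub_const at')) ?_
  filter_upwards [eventually_ge_atTop Rt] with R hR'
  rw [← hRt]
  exact hsol.ofReal_truncatedScatteringLength_sub_le hR hpos hR'
end

section
/- Explicit Thomas-Fermi minimizer: for V homogeneous of degree s and a = 1, the unique minimizer of F[ρ] = ∫(Vρ + 4πρ²) under ∫ρ = 1 is ρ(x) = (8π)^{-1}[μ̃ - V(x)]₊, where μ̃ is chosen so that ∫ρ = 1, and μ̃ = F(1,1) + 4π∫ρ². -/
/-!
With `ρ = (2κ)⁻¹ [m - V]₊`, the energy density `V t + κ t²` expands around `ρ x` as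
`(V ρ + κ ρ²) + m (t - ρ) + [V - m]₊ t + κ (t - ρ)²`, because `V + 2κρ = m` wherever `ρ > 0`.
For a competitor `σ ≥ 0` of the same mass the linear term integrates to zero, so
`E(σ) - E(ρ) = ∫ ([V - m]₊ σ + κ (σ - ρ)²) ≥ 0`, with equality only if `σ = ρ` a.e.
Multiplying the variational equation by `ρ` and integrating gives `m = E(ρ) + κ ∫ ρ²`.
-/

open Real MeasureTheory

noncomputable section

namespace ThomasFermi

variable {α : Type*} {κ m : ℝ} {V : α → ℝ}

def density (κ m : ℝ) (V : α → ℝ) (x : α) : ℝ := (2 * κ)⁻¹ * max (m - V x) 0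

def gap (κ m : ℝ) (V σ : α → ℝ) (x : α) : ℝ :=
  max (V x - m) 0 * σ x + κ * (σ x - density κ m V x) ^ 2

theorem density_nonneg (hκ : 0 < κ) (x : α) : 0 ≤ density κ m V x := by
  unfold density; positivity

theorem density_le (hκ : 0 < κ) (hV : ∀ x, 0 ≤ V x) (x : α) :
    density κ m V x ≤ (2 * κ)⁻¹ * max m 0 := by
  unfold density
  gcongr
  linarith [hV x]

theorem density_eq_zero_of_le {x : α} (h : m ≤ V x) : density κ m V x = 0 := by
  simp [density, max_eq_right (sub_nonpos.mpr h)]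

theorem density_eq_of_le (hκ : 0 < κ) {x : α} (h : V x ≤ m) :
    2 * κ * density κ m V x = m - V x := by
  rw [density, max_eq_left (sub_nonneg.mpr h), ← mul_assoc, mul_inv_cancel₀ (by positivity),
    one_mul]

/-- The variational equation `V + 2κρ = m` on `{ρ > 0}`, multiplied by `ρ`. -/
theorem mul_density (hκ : 0 < κ) (x : α) :
    V x * density κ m V x = m * density κ m V x - 2 * κ * density κ m V x ^ 2 := by
  rcases le_or_gt (V x) m with h | h
  · linear_combination density κ m V x * density_eq_of_le hκ h
  · simp [density_eq_zero_of_le h.le]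

/-- Expansion of the energy density around `ρ`: constant term, first variation `m (t - ρ)`,
and a nonnegative remainder on `t ≥ 0`. -/
theorem energy_density_eq (hκ : 0 < κ) (σ : α → ℝ) (x : α) :
    V x * σ x + κ * σ x ^ 2 =
      (V x * density κ m V x + κ * density κ m V x ^ 2) + m * (σ x - density κ m V x)
        + gap κ m V σ x := by
  rw [gap]
  rcases le_or_gt (V x) m with h | h
  · rw [max_eq_right (sub_nonpos.mpr h)]
    linear_combination (σ x - density κ m V x) * density_eq_of_le hκ h
  · rw [density_eq_zero_of_le h.le, max_eq_left (sub_nonneg.mpr h.le)]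
    ring

theorem gap_nonneg (hκ : 0 < κ) {σ : α → ℝ} (hσ : ∀ x, 0 ≤ σ x) (x : α) :
    0 ≤ gap κ m V σ x := by
  unfold gap
  have := hσ x
  positivity

section Integral

variable [MeasurableSpace α] {μ : Measure α}

def energy (μ : Measure α) (κ : ℝ) (V σ : α → ℝ) : ℝ := ∫ x, (V x * σ x + κ * σ x ^ 2) ∂μ

theorem integrable_density_sq (hκ : 0 < κ) (hV : ∀ x, 0 ≤ V x)
    (hρ : Integrable (density κ m V) μ) : Integrable (fun x => density κ m V x ^ 2) μ := by
  refine (hρ.const_mul ((2 * κ)⁻¹ * max m 0)).mono' (hρ.aestronglyMeasurable.pow 2) ?_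
  filter_upwards with x
  rw [Real.norm_eq_abs, abs_of_nonneg (sq_nonneg _), sq]
  exact mul_le_mul_of_nonneg_right (density_le hκ hV x) (density_nonneg hκ x)

theorem integrable_mul_density (hκ : 0 < κ) (hV : ∀ x, 0 ≤ V x)
    (hρ : Integrable (density κ m V) μ) : Integrable (fun x => V x * density κ m V x) μ := by
  simp_rw [mul_density hκ]
  exact (hρ.const_mul m).sub ((integrable_density_sq hκ hV hρ).const_mul _)

theorem energy_sub_energy_density {σ : α → ℝ} (hκ : 0 < κ) (hV : ∀ x, 0 ≤ V x)
    (hρ : Integrable (density κ m V) μ) (hσ : Integrable σ μ)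
    (hVσ : Integrable (fun x => V x * σ x) μ) (hσ2 : Integrable (fun x => σ x ^ 2) μ)
    (hmass : ∫ x, σ x ∂μ = ∫ x, density κ m V x ∂μ) :
    Integrable (gap κ m V σ) μ ∧
      energy μ κ V σ - energy μ κ V (density κ m V) = ∫ x, gap κ m V σ x ∂μ := by
  set ρ := density κ m V
  have hfσ : Integrable (fun x => V x * σ x + κ * σ x ^ 2) μ := hVσ.add (hσ2.const_mul κ)
  have hfρ : Integrable (fun x => V x * ρ x + κ * ρ x ^ 2) μ :=
    (integrable_mul_density hκ hV hρ).add ((integrable_density_sq hκ hV hρ).const_mul κ)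
  have hdiff : Integrable (fun x => (V x * σ x + κ * σ x ^ 2) - (V x * ρ x + κ * ρ x ^ 2)) μ :=
    hfσ.sub hfρ
  have hlin : Integrable (fun x => m * (σ x - ρ x)) μ := (hσ.sub hρ).const_mul m
  have hgap : gap κ m V σ = fun x =>
      (V x * σ x + κ * σ x ^ 2) - (V x * ρ x + κ * ρ x ^ 2) - m * (σ x - ρ x) := by
    funext x
    linarith [energy_density_eq (m := m) (V := V) hκ σ x]
  refine ⟨hgap ▸ hdiff.sub hlin, ?_⟩
  rw [hgap, integral_sub hdiff hlin, integral_sub hfσ hfρ, integral_const_mul,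
    integral_sub hσ hρ, hmass, sub_self, mul_zero, sub_zero]
  rfl

theorem energy_density_add (hκ : 0 < κ) (hV : ∀ x, 0 ≤ V x)
    (hρ : Integrable (density κ m V) μ) :
    energy μ κ V (density κ m V) + κ * ∫ x, density κ m V x ^ 2 ∂μ
      = m * ∫ x, density κ m V x ∂μ := by
  set ρ := density κ m V
  have hρ2 := integrable_density_sq hκ hV hρ
  have hfρ : Integrable (fun x => V x * ρ x + κ * ρ x ^ 2) μ :=
    (integrable_mul_density hκ hV hρ).add (hρ2.const_mul κ)
  rw [energy, ← integral_const_mul, ← integral_const_mul, ← integral_add hfρ (hρ2.const_mul κ)]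
  congr 1 with x
  linear_combination mul_density (m := m) (V := V) hκ x

theorem energy_density_le {σ : α → ℝ} (hκ : 0 < κ) (hV : ∀ x, 0 ≤ V x)
    (hρ : Integrable (density κ m V) μ) (hσ0 : ∀ x, 0 ≤ σ x) (hσ : Integrable σ μ)
    (hVσ : Integrable (fun x => V x * σ x) μ) (hσ2 : Integrable (fun x => σ x ^ 2) μ)
    (hmass : ∫ x, σ x ∂μ = ∫ x, density κ m V x ∂μ) :
    energy μ κ V (density κ m V) ≤ energy μ κ V σ := by
  have hgap := (energy_sub_energy_density hκ hV hρ hσ hVσ hσ2 hmass).2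
  linarith [integral_nonneg (μ := μ) (f := gap κ m V σ) (gap_nonneg hκ hσ0)]

theorem ae_eq_density_of_energy_eq {σ : α → ℝ} (hκ : 0 < κ) (hV : ∀ x, 0 ≤ V x)
    (hρ : Integrable (density κ m V) μ) (hσ0 : ∀ x, 0 ≤ σ x) (hσ : Integrable σ μ)
    (hVσ : Integrable (fun x => V x * σ x) μ) (hσ2 : Integrable (fun x => σ x ^ 2) μ)
    (hmass : ∫ x, σ x ∂μ = ∫ x, density κ m V x ∂μ)
    (heq : energy μ κ V σ = energy μ κ V (density κ m V)) :
    σ =ᵐ[μ] density κ m V := by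
  obtain ⟨hint, hgap⟩ := energy_sub_energy_density hκ hV hρ hσ hVσ hσ2 hmass
  rw [heq, sub_self, eq_comm, integral_eq_zero_iff_of_nonneg (gap_nonneg hκ hσ0) hint] at hgap
  filter_upwards [hgap] with x hx
  have hlin : 0 ≤ max (V x - m) 0 * σ x := mul_nonneg (le_max_right _ _) (hσ0 x)
  have hsq : κ * (σ x - density κ m V x) ^ 2 = 0 :=
    le_antisymm (by rw [Pi.zero_apply, gap] at hx; linarith) (by positivity)
  simpa [hκ.ne', sub_eq_zero] using hsq

end Integral

end ThomasFermi

theorem stmt_11_general (V : EuclideanSpace ℝ (Fin 3) → ℝ)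
    (hV0 : ∀ x, 0 ≤ V x)
    (mu : ℝ) (ρ : EuclideanSpace ℝ (Fin 3) → ℝ)
    (hρ : ρ = fun x => (8 * π)⁻¹ * max (mu - V x) 0)
    (hint : Integrable ρ) (hnorm : (∫ x, ρ x) = 1) :
    (∀ σ : EuclideanSpace ℝ (Fin 3) → ℝ, (∀ x, 0 ≤ σ x) → Integrable σ →
      Integrable (fun x => V x * σ x) → Integrable (fun x => (σ x) ^ 2) →
      (∫ x, σ x) = 1 →
      (∫ x, (V x * ρ x + 4 * π * (ρ x) ^ 2)) ≤ ∫ x, (V x * σ x + 4 * π * (σ x) ^ 2)) ∧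
    (∀ σ : EuclideanSpace ℝ (Fin 3) → ℝ, (∀ x, 0 ≤ σ x) → Integrable σ →
      Integrable (fun x => V x * σ x) → Integrable (fun x => (σ x) ^ 2) →
      (∫ x, σ x) = 1 →
      (∫ x, (V x * σ x + 4 * π * (σ x) ^ 2)) = (∫ x, (V x * ρ x + 4 * π * (ρ x) ^ 2)) →
      σ =ᵐ[volume] ρ) ∧
    mu = (∫ x, (V x * ρ x + 4 * π * (ρ x) ^ 2)) + 4 * π * ∫ x, (ρ x) ^ 2 := by
  have hκ : (0 : ℝ) < 4 * π := by positivity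
  have hρ_eq : ρ = ThomasFermi.density (4 * π) mu V := by
    rw [hρ]
    ext x
    rw [ThomasFermi.density]
    ring
  subst hρ_eq
  refine ⟨fun σ hσ0 hσ hVσ hσ2 hσ1 => ?_, fun σ hσ0 hσ hVσ hσ2 hσ1 heq => ?_, ?_⟩
  · exact ThomasFermi.energy_density_le hκ hV0 hint hσ0 hσ hVσ hσ2 (hσ1.trans hnorm.symm)
  · exact ThomasFermi.ae_eq_density_of_energy_eq hκ hV0 hint hσ0 hσ hVσ hσ2
      (hσ1.trans hnorm.symm) heq
  · have := ThomasFermi.energy_density_add (μ := volume) hκ hV0 hint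
    rw [hnorm, mul_one] at this
    exact this.symm

/-- Explicit Thomas-Fermi minimizer: for `a = 1`, the unique minimizer of
`F[ρ] = ∫(Vρ + 4πρ²)` under `∫ρ = 1` is `ρ = (8π)⁻¹[mu - V]₊` with `mu` fixed by
the normalization, and `mu = F(1,1) + 4π∫ρ²`. -/
theorem stmt_11 (V : EuclideanSpace ℝ (Fin 3) → ℝ)
    (hVc : Continuous V) (hV0 : ∀ x, 0 ≤ V x)
    (s : ℝ) (hs : 0 < s)
    (hhom : ∀ lam : ℝ, 0 < lam → ∀ x, V (lam • x) = lam ^ s * V x)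
    (hlevel : ∀ c : ℝ, 0 < c →
      volume {x : EuclideanSpace ℝ (Fin 3) | V x < c} ≠ 0 ∧
      volume {x : EuclideanSpace ℝ (Fin 3) | V x < c} < ⊤)
    (mu : ℝ) (ρ : EuclideanSpace ℝ (Fin 3) → ℝ)
    (hρ : ρ = fun x => (8 * π)⁻¹ * max (mu - V x) 0)
    (hint : Integrable ρ) (hnorm : (∫ x, ρ x) = 1) :
    (∀ σ : EuclideanSpace ℝ (Fin 3) → ℝ, (∀ x, 0 ≤ σ x) → Integrable σ →
      Integrable (fun x => V x * σ x) → Integrable (fun x => (σ x) ^ 2) →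
      (∫ x, σ x) = 1 →
      (∫ x, (V x * ρ x + 4 * π * (ρ x) ^ 2)) ≤ ∫ x, (V x * σ x + 4 * π * (σ x) ^ 2)) ∧
    (∀ σ : EuclideanSpace ℝ (Fin 3) → ℝ, (∀ x, 0 ≤ σ x) → Integrable σ →
      Integrable (fun x => V x * σ x) → Integrable (fun x => (σ x) ^ 2) →
      (∫ x, σ x) = 1 →
      (∫ x, (V x * σ x + 4 * π * (σ x) ^ 2)) = (∫ x, (V x * ρ x + 4 * π * (ρ x) ^ 2)) →
      σ =ᵐ[volume] ρ) ∧
    mu = (∫ x, (V x * ρ x + 4 * π * (ρ x) ^ 2)) + 4 * π * ∫ x, (ρ x) ^ 2 :=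
  stmt_11_general V hV0 mu ρ hρ hint hnorm
end
end

section
/- Volume exclusion integral bound: with f as in the Dyson trial function (f(r) = (1+ε)u(r)/r for r ≤ b, f = 1 for r > b, u the zero-energy scattering solution with scattering length a < b), I := ∫_{ℝ³}(1 - f(|x|)²)d³x ≤ 4π(a³/3 + ab(b-a)). -/
open Real MeasureTheory Set

/-!
Since `u b ≤ b`, the prefactor `b / u b` of the trial function is at least `1`, so the lower
bound `u r ≥ (r - a)₊` gives `1 - f(r)² ≤ 1 - ((r - a)₊ / r)²` for `r ≤ b`, while the integrand
vanishes for `r > b`. Integrating this radial majorant in spherical coordinates gives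
`4π ∫₀ᵇ (r² - (r - a)₊²) dr = 4π (b³ - (b - a)³) / 3 = 4π (a³/3 + ab(b - a))`.
-/

theorem integral_fun_norm_euclideanSpace_fin_three (g : ℝ → ℝ) :
    ∫ x : EuclideanSpace ℝ (Fin 3), g ‖x‖ = 4 * π * ∫ r in Ioi 0, r ^ 2 * g r := by
  rw [integral_fun_norm_addHaar volume g, finrank_euclideanSpace_fin, measureReal_def,
    EuclideanSpace.volume_ball_fin_three]
  simp only [ENNReal.ofReal_one, one_pow, one_mul, smul_eq_mul, nsmul_eq_mul]
  rw [ENNReal.toReal_ofReal (by positivity)]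
  push_cast
  ring

theorem integrable_fun_norm_euclideanSpace_fin_three_iff {g : ℝ → ℝ} :
    Integrable (fun x : EuclideanSpace ℝ (Fin 3) => g ‖x‖) ↔
      IntegrableOn (fun r => r ^ 2 * g r) (Ioi 0) := by
  rw [integrable_fun_norm_addHaar volume, finrank_euclideanSpace_fin]
  rfl

noncomputable def exclusionProfile (a b r : ℝ) : ℝ :=
  if r ≤ b then 1 - (max (r - a) 0 / r) ^ 2 else 0

theorem eqOn_mul_exclusionProfile (a b : ℝ) :
    EqOn (fun r => r ^ 2 * exclusionProfile a b r)
      ((Iic b).indicator fun r => r ^ 2 - max (r - a) 0 ^ 2) (Ioi 0) := by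
  intro r (hr : 0 < r)
  by_cases hrb : r ≤ b
  · simp only [exclusionProfile, if_pos hrb, indicator_of_mem (mem_Iic.2 hrb)]
    field_simp
  · simp [exclusionProfile, hrb]

theorem integrableOn_mul_exclusionProfile (a b : ℝ) :
    IntegrableOn (fun r => r ^ 2 * exclusionProfile a b r) (Ioi 0) := by
  rw [integrableOn_congr_fun (eqOn_mul_exclusionProfile a b) measurableSet_Ioi,
    integrableOn_indicator_iff measurableSet_Iic, Iic_inter_Ioi]
  exact (Continuous.integrableOn_Icc (by fun_prop)).mono_set Ioc_subset_Icc_self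

theorem integral_max_sub_zero_sq {a b : ℝ} (ha : 0 ≤ a) (hab : a ≤ b) :
    ∫ r in (0)..b, max (r - a) 0 ^ 2 = (b - a) ^ 3 / 3 := by
  have hcont : Continuous fun r : ℝ => max (r - a) 0 ^ 2 := by fun_prop
  rw [← intervalIntegral.integral_add_adjacent_intervals (b := a)
    (hcont.intervalIntegrable _ _) (hcont.intervalIntegrable _ _)]
  have h0a : ∫ r in (0)..a, max (r - a) 0 ^ 2 = 0 := by
    rw [intervalIntegral.integral_congr (g := fun _ => 0) fun r hr => ?_]
    · simp
    · rw [uIcc_of_le ha] at hr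
      simp [max_eq_right (sub_nonpos.2 hr.2)]
  have hab' : ∫ r in a..b, max (r - a) 0 ^ 2 = (b - a) ^ 3 / 3 := by
    rw [intervalIntegral.integral_congr (g := fun r => (r - a) ^ 2) fun r hr => ?_]
    · norm_num [intervalIntegral.integral_comp_sub_right (fun r => r ^ 2), integral_pow]
    · rw [uIcc_of_le hab] at hr
      simp [max_eq_left (sub_nonneg.2 hr.1)]
  rw [h0a, hab', zero_add]

theorem integral_mul_exclusionProfile {a b : ℝ} (ha : 0 ≤ a) (hab : a ≤ b) :
    ∫ r in Ioi 0, r ^ 2 * exclusionProfile a b r = (b ^ 3 - (b - a) ^ 3) / 3 := by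
  rw [setIntegral_congr_fun measurableSet_Ioi (eqOn_mul_exclusionProfile a b),
    setIntegral_indicator measurableSet_Iic, Ioi_inter_Iic,
    ← intervalIntegral.integral_of_le (ha.trans hab),
    intervalIntegral.integral_sub (by apply Continuous.intervalIntegrable; fun_prop)
      (by apply Continuous.intervalIntegrable; fun_prop),
    integral_pow, integral_max_sub_zero_sq ha hab]
  ring

theorem one_sub_sq_le_exclusionProfile {a b c r w : ℝ} (hr : 0 ≤ r) (hc : 1 ≤ c)
    (hw : 0 < r → max (r - a) 0 ≤ w) :
    1 - (if r ≤ b then c * w / r else 1) ^ 2 ≤ exclusionProfile a b r := by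
  unfold exclusionProfile
  split_ifs with hrb
  · rcases hr.eq_or_lt with rfl | hr
    · simp
    have hw0 : 0 ≤ w := (le_max_right _ _).trans (hw hr)
    have hdiv : max (r - a) 0 / r ≤ c * w / r := by
      gcongr
      nlinarith [hw hr]
    have hsq := pow_le_pow_left₀ (by positivity) hdiv 2
    linarith
  · simp

theorem stmt_19_general (u : ℝ → ℝ) (a b : ℝ) (ha : 0 < a) (hab : a < b)
    (hub : ∀ r, 0 < r → u r ≤ r)
    (hlb : ∀ r, 0 < r → max (r - a) 0 ≤ u r) :
    (∫ x : EuclideanSpace ℝ (Fin 3),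
        (1 - ((if ‖x‖ ≤ b then (1 + (b / u b - 1)) * u ‖x‖ / ‖x‖ else 1)) ^ 2))
      ≤ 4 * π * (a ^ 3 / 3 + a * b * (b - a)) := by
  have hb : 0 < b := ha.trans hab
  have hub_pos : 0 < u b := (lt_max_of_lt_left (sub_pos.2 hab)).trans_le (hlb b hb)
  have hc : 1 ≤ 1 + (b / u b - 1) := by
    simpa using (one_le_div hub_pos).2 (hub b hb)
  have hbound : 4 * π * (a ^ 3 / 3 + a * b * (b - a)) =
      ∫ x : EuclideanSpace ℝ (Fin 3), exclusionProfile a b ‖x‖ := by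
    rw [integral_fun_norm_euclideanSpace_fin_three, integral_mul_exclusionProfile ha.le hab.le]
    ring
  by_cases hint : Integrable fun x : EuclideanSpace ℝ (Fin 3) =>
      1 - ((if ‖x‖ ≤ b then (1 + (b / u b - 1)) * u ‖x‖ / ‖x‖ else 1)) ^ 2
  · rw [hbound]
    exact integral_mono hint
      (integrable_fun_norm_euclideanSpace_fin_three_iff.2 (integrableOn_mul_exclusionProfile a b))
      fun x => one_sub_sq_le_exclusionProfile (norm_nonneg x) hc (hlb ‖x‖)
  · rw [integral_undef hint]
    have hba : 0 < b - a := sub_pos.2 hab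
    positivity

/-- Volume exclusion integral bound for the Dyson trial function:
`I = ∫(1 - f(|x|)²) ≤ 4π(a³/3 + ab(b-a))`. -/
theorem stmt_19 (v u : ℝ → ℝ) (a b : ℝ) (ha : 0 < a) (hab : a < b)
    (hv : ∀ r, 0 < r → 0 ≤ v r)
    (h0 : u 0 = 0)
    (hODE : ∀ r, 0 < r → deriv (deriv u) r = (1 / 2) * v r * u r)
    (hub : ∀ r, 0 < r → u r ≤ r)
    (hlb : ∀ r, 0 < r → max (r - a) 0 ≤ u r)
    (hd0 : ∀ r, 0 < r → 0 ≤ deriv u r)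
    (hd1 : ∀ r, 0 < r → deriv u r ≤ 1)
    (hdlb : ∀ r, a < r → 1 - a / r ≤ deriv u r) :
    (∫ x : EuclideanSpace ℝ (Fin 3),
        (1 - ((if ‖x‖ ≤ b then (1 + (b / u b - 1)) * u ‖x‖ / ‖x‖ else 1)) ^ 2))
      ≤ 4 * π * (a ^ 3 / 3 + a * b * (b - a)) :=
  stmt_19_general u a b ha hab hub hlb
end
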